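/- Let N ∈ ℕ, n_x, n_u ∈ ℕ, and for i = 1,…,N let A_i ∈ ℝ^{n_x×n_x}, B_i ∈ ℝ^{n_x×n_u}, and let H_i = [[Q_i, S_iᵀ],[S_i, R_i]] ∈ ℝ^{(n_x+n_u)×(n_x+n_u)} be symmetric positive definite (Q_i ∈ ℝ^{n_x×n_x}, S_i ∈ ℝ^{n_u×n_x}, R_i ∈ ℝ^{n_u×n_u}). Let P_{N+1} ∈ ℝ^{n_x×n_x} be symmetric positive semidefinite. Define the Riccati backward recursion for i = N,…,1: D_i = R_i + B_iᵀP_{i+1}B_i, K_i = −D_i⁻¹(S_i + B_iᵀP_{i+1}A_i), P_i = Q_i + A_iᵀP_{i+1}A_i + (S_iᵀ + A_iᵀP_{i+1}B_i)K_i. Then for each i = 1,…,N, the matrix D_i is symmetric positive definite (in particular invertible, so the recursion is well-defined), and P_i is symmetric positive definite. -/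

import Mathlib

open Matrix

private lemma real_conjTranspose_eq {a b : Type*} (M : Matrix a b ℝ) : Mᴴ = Mᵀ := by
  ext i j; simp [conjTranspose_apply]

/-- Schur complement of a PosDef block matrix is PosDef. -/
private lemma schur_posDef {m n : Type*} [Fintype m] [Fintype n] [DecidableEq n]
    (A : Matrix m m ℝ) (B : Matrix m n ℝ) {D : Matrix n n ℝ} (hD : D.PosDef)
    (hM : (fromBlocks A B Bᴴ D).PosDef) : (A - B * D⁻¹ * Bᴴ).PosDef := by
  haveI := hD.isUnit.invertible
  refine PosDef.of_dotProduct_mulVec_pos ((IsHermitian.fromBlocks₂₂ A B hD.1).mp hM.1) fun x hx => ?_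
  set y : n → ℝ := -((D⁻¹ * Bᴴ) *ᵥ x) with hy
  have hv : Sum.elim x y ≠ 0 := by
    intro h
    exact hx (funext fun i => congrFun h (Sum.inl i))
  have hpos := hM.dotProduct_mulVec_pos hv
  have heq := schur_complement_eq₂₂ A B x y hD.1
  rw [dotProduct_mulVec] at hpos
  rw [heq, hy, add_neg_cancel] at hpos
  simpa [dotProduct_mulVec] using hpos

/-- The bottom-right block of a PosDef block matrix is PosDef. -/
private lemma block22_posDef {m n : Type*} [Fintype m] [Fintype n]
    {A : Matrix m m ℝ} {B : Matrix m n ℝ} {C : Matrix n m ℝ} {D : Matrix n n ℝ}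
    (hM : (fromBlocks A B C D).PosDef) : D.PosDef := by
  have hH := (isHermitian_fromBlocks_iff.mp hM.1).2.2.2
  refine PosDef.of_dotProduct_mulVec_pos hH fun y hy => ?_
  have hv : (Sum.elim (0 : m → ℝ) y) ≠ 0 := by
    intro h
    exact hy (funext fun i => congrFun h (Sum.inr i))
  have := hM.dotProduct_mulVec_pos hv
  simpa [fromBlocks_mulVec, dotProduct, Fintype.sum_sum_type] using this

private lemma riccati_step {m n : Type*} [Fintype m] [Fintype n] [DecidableEq m] [DecidableEq n]
    (Q : Matrix m m ℝ) (S : Matrix n m ℝ) (R : Matrix n n ℝ)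
    (A : Matrix m m ℝ) (B : Matrix m n ℝ) (Pn : Matrix m m ℝ)
    (hH : (fromBlocks Q Sᵀ S R).PosDef) (hPn : Pn.PosSemidef) :
    (R + Bᵀ * Pn * B).PosDef ∧
      ((Q + Aᵀ * Pn * A) -
        (Sᵀ + Aᵀ * Pn * B) * (R + Bᵀ * Pn * B)⁻¹ * (S + Bᵀ * Pn * A)).PosDef := by
  have hPnT : Pnᵀ = Pn := by rw [← real_conjTranspose_eq]; exact hPn.1
  set X : Matrix m (m ⊕ n) ℝ := fromCols A B with hX
  have hXPX : Xᴴ * Pn * X =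
      fromBlocks (Aᵀ * Pn * A) (Aᵀ * Pn * B) (Bᵀ * Pn * A) (Bᵀ * Pn * B) := by
    rw [hX, real_conjTranspose_eq, transpose_fromCols, fromRows_mul,
      fromRows_mul, mul_fromCols, mul_fromCols, fromRows_fromCols_eq_fromBlocks]
  have hMdef : fromBlocks Q Sᵀ S R + Xᴴ * Pn * X =
      fromBlocks (Q + Aᵀ * Pn * A) (Sᵀ + Aᵀ * Pn * B) (S + Bᵀ * Pn * A) (R + Bᵀ * Pn * B) := by
    rw [hXPX, fromBlocks_add]
  have hM : (fromBlocks (Q + Aᵀ * Pn * A) (Sᵀ + Aᵀ * Pn * B)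
      (S + Bᵀ * Pn * A) (R + Bᵀ * Pn * B)).PosDef := by
    rw [← hMdef]
    exact hH.add_posSemidef (hPn.conjTranspose_mul_mul_same X)
  have hD : (R + Bᵀ * Pn * B).PosDef := block22_posDef hM
  refine ⟨hD, ?_⟩
  have hBH : (Sᵀ + Aᵀ * Pn * B)ᴴ = S + Bᵀ * Pn * A := by
    rw [real_conjTranspose_eq]
    simp [transpose_add, transpose_mul, hPnT, Matrix.mul_assoc]
  have := schur_posDef (Q + Aᵀ * Pn * A) (Sᵀ + Aᵀ * Pn * B) hD (by rwa [hBH])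
  rwa [hBH] at this

/-- Well-definedness of the Riccati backward recursion. If every
stage Hessian `H_i = [[Q_i, S_iᵀ],[S_i, R_i]]` is symmetric positive definite and
the terminal matrix `P_{N+1}` is symmetric positive semidefinite, then along the
backward recursion `D_i = R_i + B_iᵀP_{i+1}B_i`,
`K_i = −D_i⁻¹(S_i + B_iᵀP_{i+1}A_i)`,
`P_i = Q_i + A_iᵀP_{i+1}A_i + (S_iᵀ + A_iᵀP_{i+1}B_i)K_i`,
each `D_i` is symmetric positive definite (hence invertible) and each `P_i` is
symmetric positive definite.
(Indices are shifted: stage data with index `i : Fin N` is stage `i+1` of the paper,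
and `P j` for `j : Fin (N+1)` is `P_{j+1}`, so `P (Fin.last N) = P_{N+1}`.) -/
theorem riccati_recursion_posDef
    (N nx nu : ℕ)
    (A Q : Fin N → Matrix (Fin nx) (Fin nx) ℝ)
    (B : Fin N → Matrix (Fin nx) (Fin nu) ℝ)
    (S : Fin N → Matrix (Fin nu) (Fin nx) ℝ)
    (R D : Fin N → Matrix (Fin nu) (Fin nu) ℝ)
    (K : Fin N → Matrix (Fin nu) (Fin nx) ℝ)
    (P : Fin (N + 1) → Matrix (Fin nx) (Fin nx) ℝ)
    (hH : ∀ i : Fin N, (Matrix.fromBlocks (Q i) (S i)ᵀ (S i) (R i)).PosDef)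
    (hPterm : (P (Fin.last N)).PosSemidef)
    (hD : ∀ i : Fin N, D i = R i + (B i)ᵀ * P i.succ * B i)
    (hK : ∀ i : Fin N, K i = -((D i)⁻¹ * (S i + (B i)ᵀ * P i.succ * A i)))
    (hP : ∀ i : Fin N,
      P i.castSucc =
        Q i + (A i)ᵀ * P i.succ * A i + ((S i)ᵀ + (A i)ᵀ * P i.succ * B i) * K i) :
    ∀ i : Fin N, (D i).PosDef ∧ (P i.castSucc).PosDef := by
  have key : ∀ i : Fin N, (P i.succ).PosSemidef → (D i).PosDef ∧ (P i.castSucc).PosDef := by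
    intro i hps
    obtain ⟨h1, h2⟩ := riccati_step (Q i) (S i) (R i) (A i) (B i) (P i.succ) (hH i) hps
    rw [← hD i] at h1 h2
    refine ⟨h1, ?_⟩
    have heq : P i.castSucc = (Q i + (A i)ᵀ * P i.succ * A i) -
        ((S i)ᵀ + (A i)ᵀ * P i.succ * B i) * (D i)⁻¹ * (S i + (B i)ᵀ * P i.succ * A i) := by
      rw [hP i, hK i]
      simp only [Matrix.mul_neg, Matrix.mul_assoc, sub_eq_add_neg]
    rw [heq]
    exact h2
  have psd : ∀ j : Fin (N + 1), (P j).PosSemidef :=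
    Fin.reverseInduction hPterm (fun i h => ((key i h).2).posSemidef)
  exact fun i => key i (psd i.succ)
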